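/- arXiv:1902.03622 — 2 statements merged into one kernel-verified Lean document; each statement's English description precedes it below -/
import Mathlib

section
/- Let m ≥ 1 and let f be an elliptical density on ℝ^m (with arbitrary location μ, positive definite scatter matrix V and density generator φ) such that all moments of f are finite and f is positive on a nonempty open subset of ℝ^m. Then the subspaces Π_k, k ≥ 0, are pairwise orthogonal with respect to the inner product ⟨p,q⟩_f = ∫_{ℝ^m} p(x)q(x)f(x)dx, and for every k ≥ 0 the space P_k of polynomials of total degree at most k decomposes as the internal direct sum P_k = Π_0 ⊕ Π_1 ⊕ ⋯ ⊕ Π_k. -/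
/-!
Since composing with an affine map does not raise the total degree, `Π_k` is the space of
polynomials of degree at most `k` that are `⟨·,·⟩_f`-orthogonal to every polynomial of lower
degree, once we know that those are sums of elements of the lower `Π_j` (test against `γ = id`).
Finite moments make `⟨·,·⟩_f` a symmetric bilinear form on polynomials, and positivity of `f` on
an open set makes it anisotropic, because a polynomial vanishing on an open set is zero.
Orthogonal projection onto the finite-dimensional space of polynomials of degree at most `k`
then splits, by induction on the degree, every `p ∈ P_k` as `p_0 + ⋯ + p_k` with `p_j ∈ Π_j`;
the splitting is unique because the `Π_j` are pairwise orthogonal and the form is anisotropic.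
-/

open MeasureTheory Matrix Finset

noncomputable section

/-- Normalizing constant `c_m` of the elliptical density with generator `φ`. -/
def cm (m : ℕ) (φ : ℝ → ℝ) : ℝ :=
  Real.Gamma ((m : ℝ) / 2) /
    (Real.pi ^ ((m : ℝ) / 2) * ∫ y in Set.Ioi (0 : ℝ), y ^ ((m : ℝ) / 2 - 1) * φ y)

/-- The elliptical density with location `μ`, scatter matrix `V` and generator `φ`. -/
def ellDensity (m : ℕ) (φ : ℝ → ℝ) (μ : Fin m → ℝ) (V : Matrix (Fin m) (Fin m) ℝ)
    (x : Fin m → ℝ) : ℝ :=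
  cm m φ * Real.sqrt (V⁻¹).det *
    φ (dotProduct (x - μ) ((V⁻¹).mulVec (x - μ)))

/-- `f` is an elliptical density (arbitrary location, positive definite scatter,
density generator), has all moments finite, and is positive on a nonempty open set. -/
def IsNiceElliptical (m : ℕ) (f : (Fin m → ℝ) → ℝ) : Prop :=
  (∃ (μ : Fin m → ℝ) (V : Matrix (Fin m) (Fin m) ℝ) (φ : ℝ → ℝ),
      V.PosDef ∧ Measurable φ ∧ (∀ y, 0 ≤ φ y) ∧
      IntegrableOn (fun y => y ^ ((m : ℝ) / 2 - 1) * φ y) (Set.Ioi 0) ∧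
      (0 < ∫ y in Set.Ioi (0 : ℝ), y ^ ((m : ℝ) / 2 - 1) * φ y) ∧
      f = ellDensity m φ μ V) ∧
    (∀ N : ℕ, Integrable fun x : Fin m → ℝ => ‖x‖ ^ N * f x) ∧
    ∃ U : Set (Fin m → ℝ), IsOpen U ∧ U.Nonempty ∧ ∀ x ∈ U, 0 < f x

/-- `P_k`: the set of functions on `ℝ^m` given by polynomials of total degree at most `k`. -/
def PkSet (m k : ℕ) : Set ((Fin m → ℝ) → ℝ) :=
  {g | ∃ p : MvPolynomial (Fin m) ℝ, p.totalDegree ≤ k ∧ ∀ x, g x = MvPolynomial.eval x p}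

/-- The affine-linear transformation `γ(x) = A (x + b)`. -/
def affMap (m : ℕ) (A : Matrix (Fin m) (Fin m) ℝ) (b : Fin m → ℝ) (x : Fin m → ℝ) :
    Fin m → ℝ :=
  A.mulVec (x + b)

/-- The subspaces `Π_k`, defined recursively: `Π_0 = P_0` and, for `k ≥ 1`, `Π_k` is the
set of `p ∈ P_k` such that `∫ p(x) q(γ(x)) f(x) dx = 0` for every `q ∈ Π_{k'}` with
`k' < k` and every affine-linear `γ ∈ AL(m)`. -/
def PiK (m : ℕ) (f : (Fin m → ℝ) → ℝ) : ℕ → Set ((Fin m → ℝ) → ℝ)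
  | 0 => PkSet m 0
  | k + 1 =>
      {p | p ∈ PkSet m (k + 1) ∧
        ∀ k' : ℕ, k' < k + 1 → ∀ q ∈ PiK m f k',
          ∀ A : Matrix (Fin m) (Fin m) ℝ, IsUnit A.det → ∀ b : Fin m → ℝ,
            (∫ x, p x * q (affMap m A b x) * f x) = 0}
  termination_by k => k
  decreasing_by omega

open MvPolynomial

namespace LinearMap.BilinForm

variable {K V : Type*} [Field K] [AddCommGroup V] [Module K V]
  {B : LinearMap.BilinForm K V}

theorem nondegenerate_restrict_of_anisotropic (hB : ∀ v, B v v = 0 → v = 0)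
    (W : Submodule K V) : (B.restrict W).Nondegenerate :=
  ⟨fun w hw => Subtype.ext (hB w (hw w)), fun w hw => Subtype.ext (hB w (hw w))⟩

theorem exists_mem_forall_sub_apply_eq_zero (hB : ∀ v, B v v = 0 → v = 0)
    (W : Submodule K V) [FiniteDimensional K W] (v : V) :
    ∃ w ∈ W, ∀ u ∈ W, B (v - w) u = 0 := by
  have hW := nondegenerate_restrict_of_anisotropic hB W
  refine ⟨((B.restrict W).toDual hW).symm ((B v).domRestrict W), Submodule.coe_mem _,
    fun u hu => ?_⟩
  have h := apply_toDual_symm_apply (B := B.restrict W) (hB := hW) ((B v).domRestrict W)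
    ⟨u, hu⟩
  rw [map_sub, LinearMap.sub_apply, sub_eq_zero]
  exact h.symm

end LinearMap.BilinForm

namespace MvPolynomial

theorem totalDegree_bind₁_le {R σ τ : Type*} [CommSemiring R] {g : σ → MvPolynomial τ R}
    (hg : ∀ i, (g i).totalDegree ≤ 1) (p : MvPolynomial σ R) :
    (bind₁ g p).totalDegree ≤ p.totalDegree := by
  conv_lhs => rw [p.as_sum]
  rw [map_sum]
  refine (totalDegree_finsetSum _ _).trans (Finset.sup_le fun s hs => ?_)
  rw [bind₁_monomial]
  refine ((totalDegree_mul _ _).trans ?_).trans (le_totalDegree hs)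
  rw [totalDegree_C, zero_add]
  refine (totalDegree_finsetProd _ _).trans (Finset.sum_le_sum fun i _ => ?_)
  exact (totalDegree_pow _ _).trans (by simpa using Nat.mul_le_mul_left (s i) (hg i))

theorem eq_zero_of_eval_eq_zero_on_isOpen {σ : Type*} [Fintype σ] {P : MvPolynomial σ ℝ}
    {U : Set (σ → ℝ)} (hU : IsOpen U) (hUne : U.Nonempty) (h : ∀ x ∈ U, eval x P = 0) :
    P = 0 := by
  obtain ⟨c, hc⟩ := hUne
  obtain ⟨r, hr, hball⟩ := Metric.isOpen_iff.1 hU c hc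
  refine funext_set (fun i => Metric.ball (c i) r) (fun i => ?_) fun x hx => ?_
  · rw [Real.ball_eq_Ioo]
    exact Set.Ioo_infinite (by linarith)
  · rw [map_zero]
    exact h x (hball (by rwa [ball_pi c hr]))

variable {K σ : Type*} [Field K]

def degreeOrthogonal (B : LinearMap.BilinForm K (MvPolynomial σ K)) (k : ℕ) :
    Submodule K (MvPolynomial σ K) where
  carrier := {P | P.totalDegree ≤ k ∧ ∀ R : MvPolynomial σ K, R.totalDegree < k → B P R = 0}
  add_mem' := fun ⟨hP, hPR⟩ ⟨hQ, hQR⟩ =>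
    ⟨(totalDegree_add _ _).trans (max_le hP hQ), fun R hR => by simp [hPR R hR, hQR R hR]⟩
  zero_mem' := ⟨by simp, fun R _ => by simp⟩
  smul_mem' := fun c P ⟨hP, hPR⟩ =>
    ⟨(totalDegree_smul_le c P).trans hP, fun R hR => by simp [hPR R hR]⟩

variable {B : LinearMap.BilinForm K (MvPolynomial σ K)}

theorem apply_eq_zero_of_mem_degreeOrthogonal {i j : ℕ} (hij : i < j)
    {P Q : MvPolynomial σ K} (hP : P ∈ degreeOrthogonal B j) (hQ : Q ∈ degreeOrthogonal B i) :
    B P Q = 0 :=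
  hP.2 Q (hQ.1.trans_lt hij)

theorem exists_sum_eq_of_totalDegree_le [Finite σ] (hB : ∀ P, B P P = 0 → P = 0) {n : ℕ}
    {P : MvPolynomial σ K} (hP : P.totalDegree ≤ n) :
    ∃ G : ℕ → MvPolynomial σ K, (∀ j ≤ n, G j ∈ degreeOrthogonal B j) ∧
      P = ∑ j ∈ Finset.range (n + 1), G j := by
  induction n generalizing P with
  | zero =>
    refine ⟨fun _ => P, fun j hj => ?_, by simp⟩
    obtain rfl : j = 0 := by omega
    exact ⟨hP, fun _ hR => absurd hR (Nat.not_lt_zero _)⟩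
  | succ n ih =>
    obtain ⟨Q, hQ, hPQ⟩ :=
      LinearMap.BilinForm.exists_mem_forall_sub_apply_eq_zero hB (restrictTotalDegree σ K n) P
    rw [mem_restrictTotalDegree] at hQ
    obtain ⟨G, hG, rfl⟩ := ih hQ
    refine ⟨Function.update G (n + 1) (P - ∑ j ∈ Finset.range (n + 1), G j),
      fun j hj => ?_, ?_⟩
    · rcases hj.eq_or_lt with rfl | hj
      · rw [Function.update_self]
        refine ⟨(totalDegree_sub _ _).trans (max_le hP (by omega)), fun R hR => ?_⟩
        exact hPQ R ((mem_restrictTotalDegree _ _ _).2 (by omega))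
      · rw [Function.update_of_ne (by omega)]
        exact hG j (by omega)
    · have hlow : ∀ j ∈ Finset.range (n + 1),
          Function.update G (n + 1) (P - ∑ j ∈ Finset.range (n + 1), G j) j = G j :=
        fun j hj => Function.update_of_ne (by have := Finset.mem_range.1 hj; omega) _ _
      rw [Finset.sum_range_succ, Function.update_self, Finset.sum_congr rfl hlow, add_sub_cancel]

theorem eq_zero_of_sum_eq_zero_of_mem_degreeOrthogonal (hB : ∀ P, B P P = 0 → P = 0)
    (hBs : B.IsSymm) {n : ℕ} {D : ℕ → MvPolynomial σ K}
    (hD : ∀ j ≤ n, D j ∈ degreeOrthogonal B j) (hsum : ∑ j ∈ Finset.range (n + 1), D j = 0)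
    {j : ℕ} (hj : j ≤ n) : D j = 0 := by
  refine hB _ ?_
  have hdiag : B (D j) (∑ i ∈ Finset.range (n + 1), D i) = B (D j) (D j) := by
    rw [map_sum]
    refine Finset.sum_eq_single_of_mem j (Finset.mem_range.2 (by omega)) fun i hi hij => ?_
    have hi : i ≤ n := Nat.lt_succ_iff.1 (Finset.mem_range.1 hi)
    rcases lt_or_gt_of_ne hij with h | h
    · exact apply_eq_zero_of_mem_degreeOrthogonal h (hD j hj) (hD i hi)
    · rw [hBs.eq]
      exact apply_eq_zero_of_mem_degreeOrthogonal h (hD i hi) (hD j hj)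
  rw [← hdiag, hsum, map_zero]

end MvPolynomial

section WeightedForm

variable {σ : Type*} {μ : Measure (σ → ℝ)} {f : (σ → ℝ) → ℝ}

theorem abs_prod_pow_le_norm_pow [Fintype σ] (x : σ → ℝ) (d : σ →₀ ℕ) :
    |∏ i, x i ^ d i| ≤ ‖x‖ ^ ∑ i, d i := by
  rw [Finset.abs_prod, ← Finset.prod_pow_eq_pow_sum]
  refine Finset.prod_le_prod (fun i _ => abs_nonneg _) fun i _ => ?_
  rw [abs_pow]
  exact pow_le_pow_left₀ (abs_nonneg _) (by simpa using norm_le_pi_norm x i) _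

theorem integrable_eval_mul_of_moments [Fintype σ]
    (hmom : ∀ N : ℕ, Integrable (fun x => ‖x‖ ^ N * f x) μ) (P : MvPolynomial σ ℝ) :
    Integrable (fun x => eval x P * f x) μ := by
  have hfm : AEStronglyMeasurable f μ := by simpa using (hmom 0).aestronglyMeasurable
  have hmon : ∀ d : σ →₀ ℕ, Integrable (fun x => (∏ i, x i ^ d i) * f x) μ := fun d =>
    (hmom (∑ i, d i)).norm.mono' ((by fun_prop : Continuous fun x : σ → ℝ =>
      ∏ i, x i ^ d i).aestronglyMeasurable.mul hfm) (ae_of_all _ fun x => by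
        rw [norm_mul, norm_mul, norm_pow, norm_norm, Real.norm_eq_abs]
        gcongr
        exact abs_prod_pow_le_norm_pow x d)
  simp_rw [eval_eq', Finset.sum_mul, mul_assoc]
  exact integrable_finsetSum _ fun d _ => (hmon d).const_mul _

variable (μ f) in
def weightedIntegral (hf : ∀ P : MvPolynomial σ ℝ, Integrable (fun x => eval x P * f x) μ) :
    MvPolynomial σ ℝ →ₗ[ℝ] ℝ where
  toFun P := ∫ x, eval x P * f x ∂μ
  map_add' P Q := by simp_rw [map_add, add_mul]; exact integral_add (hf P) (hf Q)
  map_smul' c P := by simp_rw [smul_eval, mul_assoc]; exact integral_const_mul c _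

variable (μ f) in
def weightedForm (hf : ∀ P : MvPolynomial σ ℝ, Integrable (fun x => eval x P * f x) μ) :
    LinearMap.BilinForm ℝ (MvPolynomial σ ℝ) :=
  (LinearMap.mul ℝ (MvPolynomial σ ℝ)).compr₂ (weightedIntegral μ f hf)

variable {hf : ∀ P : MvPolynomial σ ℝ, Integrable (fun x => eval x P * f x) μ}

theorem weightedForm_apply (P Q : MvPolynomial σ ℝ) :
    weightedForm μ f hf P Q = ∫ x, eval x P * eval x Q * f x ∂μ := by
  simp [weightedForm, weightedIntegral]

theorem weightedForm_isSymm : (weightedForm μ f hf).IsSymm :=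
  ⟨fun P Q => by
    simp only [weightedForm, LinearMap.compr₂_apply, LinearMap.mul_apply', mul_comm]⟩

theorem eq_zero_of_weightedForm_self_eq_zero [Fintype σ] [μ.IsOpenPosMeasure]
    (hf0 : ∀ x, 0 ≤ f x) {U : Set (σ → ℝ)} (hU : IsOpen U) (hUne : U.Nonempty)
    (hfU : ∀ x ∈ U, 0 < f x) {P : MvPolynomial σ ℝ} (hP : weightedForm μ f hf P P = 0) :
    P = 0 := by
  have hint : Integrable (fun x => eval x P * eval x P * f x) μ := by
    simpa only [map_mul] using hf (P * P)
  rw [weightedForm_apply, integral_eq_zero_iff_of_nonneg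
    (fun x => mul_nonneg (mul_self_nonneg _) (hf0 x)) hint] at hP
  have hPU : (fun x => eval x P) =ᵐ[μ.restrict U] 0 := by
    filter_upwards [ae_restrict_of_ae hP, ae_restrict_mem hU.measurableSet] with x hx hxU
    simpa [(hfU x hxU).ne'] using hx
  exact eq_zero_of_eval_eq_zero_on_isOpen hU hUne
    (Measure.eqOn_open_of_ae_eq hPU hU (continuous_eval P).continuousOn continuousOn_const)

end WeightedForm

theorem ellDensity_nonneg {m : ℕ} {φ : ℝ → ℝ} (hφ : ∀ y, 0 ≤ φ y)
    (hI : 0 ≤ ∫ y in Set.Ioi (0 : ℝ), y ^ ((m : ℝ) / 2 - 1) * φ y) (μ : Fin m → ℝ)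
    (V : Matrix (Fin m) (Fin m) ℝ) (x : Fin m → ℝ) : 0 ≤ ellDensity m φ μ V x := by
  refine mul_nonneg (mul_nonneg (div_nonneg ?_ ?_) (Real.sqrt_nonneg _)) (hφ _)
  · exact Real.Gamma_nonneg_of_nonneg (by positivity)
  · exact mul_nonneg (Real.rpow_nonneg Real.pi_pos.le _) hI

theorem exists_totalDegree_le_eval_affMap {m : ℕ} (A : Matrix (Fin m) (Fin m) ℝ)
    (b : Fin m → ℝ) (Q : MvPolynomial (Fin m) ℝ) :
    ∃ Q' : MvPolynomial (Fin m) ℝ, Q'.totalDegree ≤ Q.totalDegree ∧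
      ∀ x, eval (affMap m A b x) Q = eval x Q' := by
  refine ⟨bind₁ (fun i => ∑ j, C (A i j) * (X j + C (b j))) Q,
    totalDegree_bind₁_le (fun i => ?_) Q, fun x => ?_⟩
  · refine (totalDegree_finsetSum _ _).trans (Finset.sup_le fun j _ => ?_)
    refine (totalDegree_mul _ _).trans ?_
    rw [totalDegree_C, zero_add]
    exact (totalDegree_add _ _).trans (by simp)
  · rw [show eval x = eval₂Hom (RingHom.id ℝ) x from rfl, eval₂Hom_bind₁]
    congr 2
    funext i
    simp [affMap, Matrix.mulVec, dotProduct]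

namespace IsNiceElliptical

variable {m : ℕ} {f : (Fin m → ℝ) → ℝ}

theorem nonneg (hf : IsNiceElliptical m f) (x : Fin m → ℝ) : 0 ≤ f x := by
  obtain ⟨⟨μ, V, φ, -, -, hφ, -, hI, rfl⟩, -⟩ := hf
  exact ellDensity_nonneg hφ hI.le μ V x

theorem integrable_eval_mul (hf : IsNiceElliptical m f) (P : MvPolynomial (Fin m) ℝ) :
    Integrable fun x => eval x P * f x :=
  integrable_eval_mul_of_moments hf.2.1 P

def form (hf : IsNiceElliptical m f) : LinearMap.BilinForm ℝ (MvPolynomial (Fin m) ℝ) :=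
  weightedForm volume f hf.integrable_eval_mul

theorem form_apply (hf : IsNiceElliptical m f) (P Q : MvPolynomial (Fin m) ℝ) :
    hf.form P Q = ∫ x, eval x P * eval x Q * f x :=
  weightedForm_apply P Q

theorem form_anisotropic (hf : IsNiceElliptical m f) (P : MvPolynomial (Fin m) ℝ)
    (hP : hf.form P P = 0) : P = 0 := by
  obtain ⟨U, hU, hUne, hfU⟩ := hf.2.2
  exact eq_zero_of_weightedForm_self_eq_zero hf.nonneg hU hUne hfU hP

end IsNiceElliptical

section PiK

variable {m : ℕ} {f : (Fin m → ℝ) → ℝ}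

theorem PiK_subset_PkSet (k : ℕ) : PiK m f k ⊆ PkSet m k := by
  intro p hp
  cases k with
  | zero => rwa [PiK] at hp
  | succ k => rw [PiK] at hp; exact hp.1

theorem integral_mul_mul_eq_zero_of_mem_PiK {k k' : ℕ} (hlt : k' < k)
    {p q : (Fin m → ℝ) → ℝ} (hp : p ∈ PiK m f k) (hq : q ∈ PiK m f k') :
    ∫ x, p x * q x * f x = 0 := by
  obtain ⟨k, rfl⟩ : ∃ n, k = n + 1 := ⟨k - 1, by omega⟩
  rw [PiK] at hp
  simpa [affMap] using hp.2 k' hlt q hq 1 (by simp) 0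

theorem eval_mem_PiK (hf : IsNiceElliptical m f) {k : ℕ} {P : MvPolynomial (Fin m) ℝ}
    (hP : P ∈ degreeOrthogonal hf.form k) : (fun x => eval x P) ∈ PiK m f k := by
  cases k with
  | zero => rw [PiK]; exact ⟨P, hP.1, fun _ => rfl⟩
  | succ k =>
    rw [PiK]
    refine ⟨⟨P, hP.1, fun _ => rfl⟩, fun k' hk' q hq A _ b => ?_⟩
    obtain ⟨Q, hQ, hqQ⟩ := PiK_subset_PkSet k' hq
    obtain ⟨Q', hQ', hQQ'⟩ := exists_totalDegree_le_eval_affMap A b Q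
    simp only [hqQ, hQQ', ← hf.form_apply]
    exact hP.2 Q' (by omega)

theorem exists_mem_degreeOrthogonal_of_mem_PiK (hf : IsNiceElliptical m f) {k : ℕ}
    {p : (Fin m → ℝ) → ℝ} (hp : p ∈ PiK m f k) :
    ∃ P ∈ degreeOrthogonal hf.form k, p = fun x => eval x P := by
  cases k with
  | zero =>
    rw [PiK] at hp
    obtain ⟨P, hP, hpP⟩ := hp
    exact ⟨P, ⟨hP, fun _ hR => absurd hR (Nat.not_lt_zero _)⟩, funext hpP⟩
  | succ k =>
    rw [PiK] at hp
    obtain ⟨⟨P, hP, hpP⟩, horth⟩ := hp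
    obtain rfl : p = fun x => eval x P := funext hpP
    refine ⟨P, ⟨hP, fun R hR => ?_⟩, rfl⟩
    obtain ⟨G, hG, rfl⟩ :=
      exists_sum_eq_of_totalDegree_le hf.form_anisotropic (Nat.lt_succ_iff.1 hR)
    rw [map_sum]
    refine Finset.sum_eq_zero fun j hj => ?_
    have hj : j < k + 1 := Finset.mem_range.1 hj
    rw [hf.form_apply]
    simpa [affMap] using horth j hj _ (eval_mem_PiK hf (hG j (by omega))) 1 (by simp) 0

theorem eq_of_sum_eq_of_mem_PiK (hf : IsNiceElliptical m f) {n : ℕ}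
    {g g' : ℕ → (Fin m → ℝ) → ℝ} (hg : ∀ j ≤ n, g j ∈ PiK m f j)
    (hg' : ∀ j ≤ n, g' j ∈ PiK m f j)
    (hsum : ∀ x, ∑ j ∈ Finset.range (n + 1), g j x = ∑ j ∈ Finset.range (n + 1), g' j x)
    {j : ℕ} (hj : j ≤ n) : g j = g' j := by
  choose! P hP hgP using fun j (hj : j ≤ n) =>
    exists_mem_degreeOrthogonal_of_mem_PiK hf (hg j hj)
  choose! P' hP' hgP' using fun j (hj : j ≤ n) =>
    exists_mem_degreeOrthogonal_of_mem_PiK hf (hg' j hj)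
  have hzero : ∑ i ∈ Finset.range (n + 1), (P i - P' i) = 0 := by
    refine MvPolynomial.funext fun x => ?_
    have hi : ∀ i ∈ Finset.range (n + 1), eval x (P i - P' i) = g i x - g' i x := fun i hi => by
      have hi : i ≤ n := Nat.lt_succ_iff.1 (Finset.mem_range.1 hi)
      rw [hgP i hi, hgP' i hi, map_sub]
    rw [map_sum, Finset.sum_congr rfl hi, Finset.sum_sub_distrib, hsum, sub_self, map_zero]
  have hPP' := eq_zero_of_sum_eq_zero_of_mem_degreeOrthogonal hf.form_anisotropic
    weightedForm_isSymm (fun i hi => Submodule.sub_mem _ (hP i hi) (hP' i hi)) hzero hj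
  rw [hgP j hj, hgP' j hj, sub_eq_zero.1 hPP']

end PiK

theorem statement0_general (m : ℕ) (f : (Fin m → ℝ) → ℝ)
    (hf : IsNiceElliptical m f) :
    (∀ k k' : ℕ, k ≠ k' → ∀ p ∈ PiK m f k, ∀ q ∈ PiK m f k',
      (∫ x, p x * q x * f x) = 0) ∧
    (∀ k : ℕ, ∀ p ∈ PkSet m k,
      ∃ g : ℕ → ((Fin m → ℝ) → ℝ),
        (∀ j, j ≤ k → g j ∈ PiK m f j) ∧
        (∀ x, p x = ∑ j ∈ Finset.range (k + 1), g j x) ∧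
        ∀ g' : ℕ → ((Fin m → ℝ) → ℝ),
          (∀ j, j ≤ k → g' j ∈ PiK m f j) →
          (∀ x, p x = ∑ j ∈ Finset.range (k + 1), g' j x) →
          ∀ j, j ≤ k → g' j = g j) := by
  refine ⟨fun k k' hne p hp q hq => ?_, fun k p ⟨P, hP, hpP⟩ => ?_⟩
  · rcases lt_or_gt_of_ne hne with h | h
    · simpa only [mul_comm (p _)] using integral_mul_mul_eq_zero_of_mem_PiK h hq hp
    · exact integral_mul_mul_eq_zero_of_mem_PiK h hp hq
  · obtain ⟨G, hG, rfl⟩ := exists_sum_eq_of_totalDegree_le hf.form_anisotropic hP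
    have hGk : ∀ j ≤ k, (fun x => eval x (G j)) ∈ PiK m f j :=
      fun j hj => eval_mem_PiK hf (hG j hj)
    refine ⟨fun j x => eval x (G j), hGk, fun x => by rw [hpP, map_sum],
      fun g' hg' hpg' j hj => ?_⟩
    exact eq_of_sum_eq_of_mem_PiK hf hg' hGk (fun x => by rw [← hpg', hpP, map_sum]) hj

/-- The subspaces `Π_k` are pairwise orthogonal with respect to
`⟨p,q⟩_f = ∫ p q f`, and `P_k` decomposes as the internal direct sum
`P_k = Π_0 ⊕ Π_1 ⊕ ⋯ ⊕ Π_k`. -/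
theorem statement0 (m : ℕ) (hm : 1 ≤ m) (f : (Fin m → ℝ) → ℝ)
    (hf : IsNiceElliptical m f) :
    (∀ k k' : ℕ, k ≠ k' → ∀ p ∈ PiK m f k, ∀ q ∈ PiK m f k',
      (∫ x, p x * q x * f x) = 0) ∧
    (∀ k : ℕ, ∀ p ∈ PkSet m k,
      ∃ g : ℕ → ((Fin m → ℝ) → ℝ),
        (∀ j, j ≤ k → g j ∈ PiK m f j) ∧
        (∀ x, p x = ∑ j ∈ Finset.range (k + 1), g j x) ∧
        ∀ g' : ℕ → ((Fin m → ℝ) → ℝ),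
          (∀ j, j ≤ k → g' j ∈ PiK m f j) →
          (∀ x, p x = ∑ j ∈ Finset.range (k + 1), g' j x) →
          ∀ j, j ≤ k → g' j = g j) :=
  statement0_general m f hf

end
end

section
/- Let n ≥ 1 and let Y_1, …, Y_n ∈ ℝ² be nonzero vectors with ∑_{i=1}^n Y_i = 0 and ∑_{i=1}^n Y_i Y_iᵀ = n·I_2. Write R_i = ‖Y_i‖ and U_i = Y_i/R_i = (u_{i1}, u_{i2}). Define π̄_1 = n⁻¹∑_i R_i³ u_{i1}(3 − 4u_{i1}²)/(2√6), π̄_2 = n⁻¹∑_i R_i³ u_{i2}(1 − 4u_{i1}²)/(2√6), π̄_3 = n⁻¹∑_i R_i(R_i² − 4)u_{i1}/(2√2), π̄_4 = n⁻¹∑_i R_i(R_i² − 4)u_{i2}/(2√2), and Mardia's bivariate skewness b_1 = n⁻²∑_{i=1}^n∑_{i'=1}^n (Y_iᵀY_{i'})³. Then π̄_1² + π̄_2² + π̄_3² + π̄_4² = b_1/6; equivalently, the smooth test statistic Q_3 = n(π̄_1² + π̄_2² + π̄_3² + π̄_4²) equals n·b_{1,2}/6. -/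
/- Writing z = x + iy, the numerators of π̄₁ and π̄₂ are -Re z³ and -Im z³, and those of π̄₃, π̄₄
are (|z|² - 4)·x and (|z|² - 4)·y; since ∑ Yᵢ = 0 the linear parts drop out and the π̄ are linear in
the third moments m_abc = ∑ᵢ Y_ia Y_ib Y_ic. On the other side, expanding the cube gives
∑ᵢ ∑ⱼ (Yᵢ ⬝ Yⱼ)³ = ∑_abc m_abc², and the two quadratic forms in m₀₀₀, m₀₀₁, m₀₁₁, m₁₁₁ agree up to
the factor 6. -/

open Matrix Finset

section Moments

variable {α : Type*} [CommSemiring α]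

lemma sum_pow_three {ι : Type*} [Fintype ι] (f : ι → α) :
    (∑ a, f a) ^ 3 = ∑ a, ∑ b, ∑ c, f a * f b * f c := by
  rw [pow_three', Finset.sum_mul_sum]
  simp_rw [Finset.sum_mul, Finset.mul_sum]

lemma sum_sum_dotProduct_pow_three {ι d : Type*} [Fintype ι] [Fintype d] (Y : ι → d → α) :
    ∑ i, ∑ j, dotProduct (Y i) (Y j) ^ 3 =
      ∑ a, ∑ b, ∑ c, (∑ i, Y i a * Y i b * Y i c) ^ 2 := by
  simp only [dotProduct, sum_pow_three, sq, Finset.sum_mul_sum,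
    Finset.sum_comm (γ := ι) (α := d)]
  simp only [mul_comm, mul_left_comm]

lemma sum_sum_dotProduct_pow_three_fin_two {ι : Type*} [Fintype ι] (Y : ι → Fin 2 → α) :
    ∑ i, ∑ j, dotProduct (Y i) (Y j) ^ 3 =
      (∑ i, Y i 0 ^ 3) ^ 2 + 3 * (∑ i, Y i 1 * Y i 0 ^ 2) ^ 2 +
        3 * (∑ i, Y i 0 * Y i 1 ^ 2) ^ 2 + (∑ i, Y i 1 ^ 3) ^ 2 := by
  rw [sum_sum_dotProduct_pow_three]
  simp only [Fin.sum_univ_two, pow_succ, pow_zero, one_mul, mul_comm, mul_left_comm, mul_assoc]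
  ring

end Moments

section Polar

variable {r x y : ℝ}

lemma mul_div_cancel_of_sq_eq_add_sq (hr : r ^ 2 = x ^ 2 + y ^ 2) : r * (x / r) = x := by
  rcases eq_or_ne r 0 with rfl | hr0
  · have hx : x = 0 := by nlinarith [sq_nonneg y]
    simp [hx]
  · exact mul_div_cancel₀ x hr0

lemma polar_neg_re_cube (hr : r ^ 2 = x ^ 2 + y ^ 2) :
    r ^ 3 * (x / r) * (3 - 4 * (x / r) ^ 2) = 3 * x * y ^ 2 - x ^ 3 := by
  calc _ = 3 * r ^ 2 * (r * (x / r)) - 4 * (r * (x / r)) ^ 3 := by ring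
    _ = _ := by rw [mul_div_cancel_of_sq_eq_add_sq hr, hr]; ring

lemma polar_neg_im_cube (hr : r ^ 2 = x ^ 2 + y ^ 2) :
    r ^ 3 * (y / r) * (1 - 4 * (x / r) ^ 2) = y ^ 3 - 3 * y * x ^ 2 := by
  have hr' : r ^ 2 = y ^ 2 + x ^ 2 := by rw [hr, add_comm]
  calc _ = r ^ 2 * (r * (y / r)) - 4 * (r * (x / r)) ^ 2 * (r * (y / r)) := by ring
    _ = _ := by
      rw [mul_div_cancel_of_sq_eq_add_sq hr, mul_div_cancel_of_sq_eq_add_sq hr', hr]; ring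

lemma polar_radial_cubic (hr : r ^ 2 = x ^ 2 + y ^ 2) :
    r * (r ^ 2 - 4) * (x / r) = x ^ 3 + x * y ^ 2 - 4 * x := by
  calc _ = (r ^ 2 - 4) * (r * (x / r)) := by ring
    _ = _ := by rw [mul_div_cancel_of_sq_eq_add_sq hr, hr]; ring

end Polar

theorem statement17_general (n : ℕ)
    (Y : Fin n → Fin 2 → ℝ)
    (hmean : ∑ i, Y i = 0)
    (R : Fin n → ℝ) (hR : ∀ i, R i = Real.sqrt (Y i 0 ^ 2 + Y i 1 ^ 2))
    (u : Fin n → Fin 2 → ℝ) (hu : ∀ i a, u i a = Y i a / R i)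
    (π₁ π₂ π₃ π₄ : ℝ)
    (hπ₁ : π₁ = (n : ℝ)⁻¹ *
      ∑ i, R i ^ 3 * u i 0 * (3 - 4 * u i 0 ^ 2) / (2 * Real.sqrt 6))
    (hπ₂ : π₂ = (n : ℝ)⁻¹ *
      ∑ i, R i ^ 3 * u i 1 * (1 - 4 * u i 0 ^ 2) / (2 * Real.sqrt 6))
    (hπ₃ : π₃ = (n : ℝ)⁻¹ *
      ∑ i, R i * (R i ^ 2 - 4) * u i 0 / (2 * Real.sqrt 2))
    (hπ₄ : π₄ = (n : ℝ)⁻¹ *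
      ∑ i, R i * (R i ^ 2 - 4) * u i 1 / (2 * Real.sqrt 2))
    (b₁ : ℝ)
    (hb₁ : b₁ = ((n : ℝ) ^ 2)⁻¹ *
      ∑ i, ∑ i', dotProduct (Y i) (Y i') ^ 3) :
    π₁ ^ 2 + π₂ ^ 2 + π₃ ^ 2 + π₄ ^ 2 = b₁ / 6 := by
  have hRY : ∀ i, R i ^ 2 = Y i 0 ^ 2 + Y i 1 ^ 2 := fun i => by
    rw [hR i, Real.sq_sqrt (by positivity)]
  have hRY' : ∀ i, R i ^ 2 = Y i 1 ^ 2 + Y i 0 ^ 2 := fun i => by rw [hRY, add_comm]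
  have hsum : ∀ a, ∑ i, Y i a = 0 := fun a => by simpa using congrFun hmean a
  simp only [hu] at hπ₁ hπ₂ hπ₃ hπ₄
  simp only [← sum_div, polar_neg_re_cube (hRY _), polar_neg_im_cube (hRY _),
    polar_radial_cubic (hRY _), polar_radial_cubic (hRY' _)] at hπ₁ hπ₂ hπ₃ hπ₄
  simp only [sum_sub_distrib, sum_add_distrib, ← mul_sum, mul_assoc, hsum] at hπ₁ hπ₂ hπ₃ hπ₄
  rw [hπ₁, hπ₂, hπ₃, hπ₄, hb₁, sum_sum_dotProduct_pow_three_fin_two]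
  simp only [mul_pow, div_pow, Real.sq_sqrt (by norm_num : (0 : ℝ) ≤ 6),
    Real.sq_sqrt (by norm_num : (0 : ℝ) ≤ 2)]
  ring

/-- For standardized bivariate data (`∑ Y_i = 0`, `∑ Y_iY_iᵀ = n I₂`),
the degree-3 smooth test statistic equals Mardia's bivariate skewness statistic:
`π̄₁² + π̄₂² + π̄₃² + π̄₄² = b₁/6`, where `b₁ = n⁻² ∑_i ∑_{i'} (Y_iᵀY_{i'})³`. -/
theorem statement17 (n : ℕ) (hn : 1 ≤ n)
    (Y : Fin n → Fin 2 → ℝ) (hY0 : ∀ i, Y i ≠ 0)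
    (hmean : ∑ i, Y i = 0)
    (hcov : ∑ i, Matrix.vecMulVec (Y i) (Y i) =
      (n : ℝ) • (1 : Matrix (Fin 2) (Fin 2) ℝ))
    (R : Fin n → ℝ) (hR : ∀ i, R i = Real.sqrt (Y i 0 ^ 2 + Y i 1 ^ 2))
    (u : Fin n → Fin 2 → ℝ) (hu : ∀ i a, u i a = Y i a / R i)
    (π₁ π₂ π₃ π₄ : ℝ)
    (hπ₁ : π₁ = (n : ℝ)⁻¹ *
      ∑ i, R i ^ 3 * u i 0 * (3 - 4 * u i 0 ^ 2) / (2 * Real.sqrt 6))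
    (hπ₂ : π₂ = (n : ℝ)⁻¹ *
      ∑ i, R i ^ 3 * u i 1 * (1 - 4 * u i 0 ^ 2) / (2 * Real.sqrt 6))
    (hπ₃ : π₃ = (n : ℝ)⁻¹ *
      ∑ i, R i * (R i ^ 2 - 4) * u i 0 / (2 * Real.sqrt 2))
    (hπ₄ : π₄ = (n : ℝ)⁻¹ *
      ∑ i, R i * (R i ^ 2 - 4) * u i 1 / (2 * Real.sqrt 2))
    (b₁ : ℝ)
    (hb₁ : b₁ = ((n : ℝ) ^ 2)⁻¹ *
      ∑ i, ∑ i', dotProduct (Y i) (Y i') ^ 3) :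
    π₁ ^ 2 + π₂ ^ 2 + π₃ ^ 2 + π₄ ^ 2 = b₁ / 6 :=
  statement17_general n Y hmean R hR u hu π₁ π₂ π₃ π₄ hπ₁ hπ₂ hπ₃ hπ₄ b₁ hb₁
end
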